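/- The image in ℝP² of a half great circle of S² (i.e., the projection of a great circle of S² under the double cover S² → ℝP²) is a smooth embedded closed curve in ℝP² that does not inscribe any rectangle of type θ for any θ ∈ (0, π), where ℝP² carries the constant-curvature metric induced from the round S². -/

import Mathlib

open Real
open scoped RealInnerProductSpace

noncomputable section

/-- Euclidean 3-space. -/
abbrev E3 := EuclideanSpace ℝ (Fin 3)

/-- The cross product on `ℝ³`, giving the complex structure on tangent
planes of the unit sphere. -/
def crossE (u v : E3) : E3 :=
  (WithLp.equiv 2 (Fin 3 → ℝ)).symm
    ![u 1 * v 2 - u 2 * v 1, u 2 * v 0 - u 0 * v 2, u 0 * v 1 - u 1 * v 0]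

/-- The Riemannian exponential map of the round unit sphere. -/
def expS (x v : E3) : E3 := Real.cos ‖v‖ • x + (Real.sin ‖v‖ / ‖v‖) • v

/-- The antipodal equivalence relation on `ℝ³`. -/
def antipodalSetoid : Setoid E3 where
  r x y := x = y ∨ x = -y
  iseqv := by
    constructor
    · intro x; exact Or.inl rfl
    · rintro x y (rfl | rfl)
      · exact Or.inl rfl
      · right; simp
    · rintro x y z (rfl | rfl) (h | h)
      · exact Or.inl h
      · exact Or.inr h
      · right; rw [h]
      · left; rw [h]; simp

/-- The real projective plane `ℝP² = S²/{±1}` (as a quotient of `ℝ³`;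
restricted to the unit sphere this is the antipodal quotient, and the
quotient map is a local isometry for the constant-curvature metric). -/
def RP2 := Quotient antipodalSetoid

/-- The quotient map `ℝ³ → ℝP²` (the double cover on the unit sphere). -/
def qmap : E3 → RP2 := Quotient.mk antipodalSetoid

/-- The great circle of `S²` cut out by the plane `z = 0`. -/
def greatCircle : Set E3 := {z | ‖z‖ = 1 ∧ z 2 = 0}

/-- The image in `ℝP²` of a (half) great circle of `S²` — a smooth closed
geodesic — does not inscribe any rectangle of type `θ` for `θ ∈ (0,π)`:
there are no four (distinct) points on it of the form
`exp_x(v₁), exp_x(v₂), exp_x(−v₁), exp_x(−v₂)` (in `ℝP²`, via the local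
isometry `qmap`) with `v₁, v₂ ∈ T_xS²` nonzero, of equal norm, at angle `θ`. -/
theorem stmt19 (θ : ℝ) (hθ : θ ∈ Set.Ioo 0 π) :
    ¬ ∃ (x v₁ v₂ : E3), ‖x‖ = 1 ∧ ⟪x, v₁⟫ = 0 ∧ ⟪x, v₂⟫ = 0 ∧
      v₁ ≠ 0 ∧ v₂ ≠ 0 ∧ ‖v₁‖ = ‖v₂‖ ∧ InnerProductGeometry.angle v₁ v₂ = θ ∧
      qmap (expS x v₁) ∈ qmap '' greatCircle ∧
      qmap (expS x v₂) ∈ qmap '' greatCircle ∧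
      qmap (expS x (-v₁)) ∈ qmap '' greatCircle ∧
      qmap (expS x (-v₂)) ∈ qmap '' greatCircle ∧
      [qmap (expS x v₁), qmap (expS x v₂),
        qmap (expS x (-v₁)), qmap (expS x (-v₂))].Pairwise (· ≠ ·) := by

  rintro ⟨x, v₁, v₂, hx, hxv₁, hxv₂, hv₁, hv₂, hnorm, hangle, m1, m2, m3, m4, hpw⟩
  -- any point projecting into the circle's image has vanishing z-coordinate
  have memz : ∀ p : E3, qmap p ∈ qmap '' greatCircle → p 2 = 0 := by
    rintro p ⟨z, ⟨hz1, hz2⟩, hq⟩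
    rcases Quotient.exact hq with h | h
    · rw [← h]; exact hz2
    · have : (-p) 2 = 0 := by rw [← h]; exact hz2
      simpa using this
  have hz1 := memz _ m1
  have hz2 := memz _ m2
  have hz3 := memz _ m3
  have hz4 := memz _ m4
  -- extract the distinctness we need
  simp only [List.pairwise_cons, List.mem_cons, List.not_mem_nil] at hpw
  have hne : qmap (expS x v₁) ≠ qmap (expS x (-v₁)) := by
    apply hpw.1
    simp
  have hr : ‖v₁‖ ≠ 0 := norm_ne_zero_iff.2 hv₁
  have hsin : Real.sin ‖v₁‖ ≠ 0 := by
    intro h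
    apply hne
    apply Quotient.sound
    left
    simp [expS, norm_neg, h]
  have hcos : Real.cos ‖v₁‖ ≠ 0 := by
    intro h
    apply hne
    apply Quotient.sound
    right
    simp [expS, norm_neg, h]
  have ecoord : ∀ v : E3, (expS x v) 2 = Real.cos ‖v‖ * x 2 + (Real.sin ‖v‖ / ‖v‖) * v 2 := by
    intro v
    simp [expS]
  rw [ecoord] at hz1 hz2 hz3 hz4
  rw [norm_neg] at hz3 hz4
  have hn2 : ‖v₂‖ = ‖v₁‖ := hnorm.symm
  rw [hn2] at hz2 hz4
  simp only [PiLp.neg_apply] at hz3 hz4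
  -- derive vanishing of the z-coordinates of x, v₁, v₂
  have hx2 : x 2 = 0 := by
    have h5 : Real.cos ‖v₁‖ * x 2 = 0 := by linarith
    rcases mul_eq_zero.1 h5 with h | h
    · exact absurd h hcos
    · exact h
  have hq : Real.sin ‖v₁‖ / ‖v₁‖ ≠ 0 := div_ne_zero hsin hr
  have hv12 : v₁ 2 = 0 := by
    have h5 : (Real.sin ‖v₁‖ / ‖v₁‖) * v₁ 2 = 0 := by linarith
    rcases mul_eq_zero.1 h5 with h | h
    · exact absurd h hq
    · exact h
  have hv22 : v₂ 2 = 0 := by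
    have h5 : (Real.sin ‖v₁‖ / ‖v₁‖) * v₂ 2 = 0 := by
      rw [hx2] at hz2; linarith
    rcases mul_eq_zero.1 h5 with h | h
    · exact absurd h hq
    · exact h
  -- coordinate form of inner products and norms
  have inner3 : ∀ u v : E3, ⟪u, v⟫ = u 0 * v 0 + u 1 * v 1 + u 2 * v 2 := by
    intro u v
    simp [PiLp.inner_apply, Fin.sum_univ_three, RCLike.inner_apply]
    ring
  have nsq : ∀ v : E3, ‖v‖ ^ 2 = v 0 ^ 2 + v 1 ^ 2 + v 2 ^ 2 := by
    intro v
    rw [← real_inner_self_eq_norm_sq, inner3]; ring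
  have hxx : x 0 ^ 2 + x 1 ^ 2 = 1 := by
    have := nsq x
    rw [hx, hx2] at this
    nlinarith
  have H1 : x 0 * v₁ 0 + x 1 * v₁ 1 = 0 := by
    rw [inner3, hx2] at hxv₁; linarith
  have H2 : x 0 * v₂ 0 + x 1 * v₂ 1 = 0 := by
    rw [inner3, hx2] at hxv₂; linarith
  have E1 : x 0 * (v₁ 0 * v₂ 1 - v₁ 1 * v₂ 0) = 0 := by
    linear_combination v₂ 1 * H1 - v₁ 1 * H2
  have E2 : x 1 * (v₁ 0 * v₂ 1 - v₁ 1 * v₂ 0) = 0 := by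
    linear_combination v₁ 0 * H2 - v₂ 0 * H1
  have hD : v₁ 0 * v₂ 1 - v₁ 1 * v₂ 0 = 0 := by
    linear_combination x 0 * E1 + x 1 * E2 - (v₁ 0 * v₂ 1 - v₁ 1 * v₂ 0) * hxx
  have hip : ⟪v₁, v₂⟫ = v₁ 0 * v₂ 0 + v₁ 1 * v₂ 1 := by
    rw [inner3, hv12, hv22]; ring
  have hsq : ⟪v₁, v₂⟫ ^ 2 = (‖v₁‖ * ‖v₂‖) ^ 2 := by
    have n1 := nsq v₁
    have n2 := nsq v₂
    rw [hv12] at n1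
    rw [hv22] at n2
    rw [hip, mul_pow, n1, n2]
    linear_combination (-(v₁ 0 * v₂ 1) + v₁ 1 * v₂ 0) * hD
  have hN : 0 < ‖v₁‖ * ‖v₂‖ :=
    mul_pos (norm_pos_iff.2 hv₁) (norm_pos_iff.2 hv₂)
  have hfac : (⟪v₁, v₂⟫ - ‖v₁‖ * ‖v₂‖) * (⟪v₁, v₂⟫ + ‖v₁‖ * ‖v₂‖) = 0 := by
    linear_combination hsq
  rcases mul_eq_zero.1 hfac with h | h
  · have : ⟪v₁, v₂⟫ = ‖v₁‖ * ‖v₂‖ := by linarith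
    have h0 : InnerProductGeometry.angle v₁ v₂ = 0 :=
      (InnerProductGeometry.inner_eq_mul_norm_iff_angle_eq_zero hv₁ hv₂).1 this
    rw [hangle] at h0
    exact absurd h0 (ne_of_gt hθ.1)
  · have : ⟪v₁, v₂⟫ = -(‖v₁‖ * ‖v₂‖) := by linarith
    have h0 : InnerProductGeometry.angle v₁ v₂ = π :=
      (InnerProductGeometry.inner_eq_neg_mul_norm_iff_angle_eq_pi hv₁ hv₂).1 this
    rw [hangle] at h0
    exact absurd h0 (ne_of_lt hθ.2)


end
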